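/- If F: SU(1,1) → ℂ satisfies the equivariance condition 2iX₀F = -NF, then the pullback by the section s(z) = (1/√(1-|z|²))[[1,z̄],[z,1]] satisfies i((1-|z|²)∂̄ - (N/2)z)(s*F) = s*(X₊F). In particular, if moreover X₊F = 0 with N = 0, then s*F is holomorphic on the disk. -/

import Mathlib

open Complex

noncomputable def d1 (F : ℂ × ℂ → ℂ) (p : ℂ × ℂ) : ℂ :=
  (fderiv ℝ F p (1, 0) - Complex.I * fderiv ℝ F p (Complex.I, 0)) / 2

noncomputable def d1bar (F : ℂ × ℂ → ℂ) (p : ℂ × ℂ) : ℂ :=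
  (fderiv ℝ F p (1, 0) + Complex.I * fderiv ℝ F p (Complex.I, 0)) / 2

noncomputable def d2 (F : ℂ × ℂ → ℂ) (p : ℂ × ℂ) : ℂ :=
  (fderiv ℝ F p (0, 1) - Complex.I * fderiv ℝ F p (0, Complex.I)) / 2

noncomputable def d2bar (F : ℂ × ℂ → ℂ) (p : ℂ × ℂ) : ℂ :=
  (fderiv ℝ F p (0, 1) + Complex.I * fderiv ℝ F p (0, Complex.I)) / 2

noncomputable def X0op (F : ℂ × ℂ → ℂ) (p : ℂ × ℂ) : ℂ :=
  (Complex.I / 2) * (p.2 * d2 F p + p.1 * d1 F p -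
    (starRingEnd ℂ) p.2 * d2bar F p - (starRingEnd ℂ) p.1 * d1bar F p)

noncomputable def Xplusop (F : ℂ × ℂ → ℂ) (p : ℂ × ℂ) : ℂ :=
  Complex.I * (p.1 * d2bar F p + p.2 * d1bar F p)

/-- Wirtinger derivative ∂/∂z̄ on ℂ. -/
noncomputable def wderivBar (f : ℂ → ℂ) (z : ℂ) : ℂ :=
  (fderiv ℝ f z 1 + Complex.I * fderiv ℝ f z Complex.I) / 2

/-- The section s : H² → SU(1,1), viewed in the coordinates (z₁,z₂):
s(z) = (1/√(1-|z|²))·(1, z). -/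
noncomputable def sPt (z : ℂ) : ℂ × ℂ :=
  (((1 / Real.sqrt (1 - Complex.normSq z) : ℝ) : ℂ),
    ((1 / Real.sqrt (1 - Complex.normSq z) : ℝ) : ℂ) * z)

lemma clm_decomp (L : ℂ × ℂ →L[ℝ] ℂ) (v₁ v₂ : ℂ) :
    L (v₁, v₂) = (v₁.re : ℂ) * L (1, 0) + (v₁.im : ℂ) * L (Complex.I, 0) +
      (v₂.re : ℂ) * L (0, 1) + (v₂.im : ℂ) * L (0, Complex.I) := by
  have h : (v₁, v₂) = v₁.re • ((1:ℂ), (0:ℂ)) + v₁.im • (Complex.I, (0:ℂ)) +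
      v₂.re • ((0:ℂ), (1:ℂ)) + v₂.im • ((0:ℂ), Complex.I) := by
    refine Prod.ext ?_ ?_ <;> simp [Complex.real_smul]
  rw [h, map_add, map_add, map_add, map_smul, map_smul, map_smul, map_smul]
  simp [Complex.real_smul]

lemma clm_decomp1 (L : ℂ →L[ℝ] ℂ) (v : ℂ) :
    L v = (v.re : ℂ) * L 1 + (v.im : ℂ) * L Complex.I := by
  have h : L (v.re • (1:ℂ) + v.im • Complex.I) = (v.re : ℂ) * L 1 + (v.im : ℂ) * L Complex.I := by
    rw [map_add, map_smul, map_smul]; simp [Complex.real_smul]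
  rw [← h]; congr 1
  simp [Complex.real_smul]

lemma sPt_mem (z : ℂ) (hz : Complex.normSq z < 1) :
    Complex.normSq (sPt z).1 - Complex.normSq (sPt z).2 = 1 := by
  have hu : (0:ℝ) < 1 - Complex.normSq z := by linarith
  have hss : Real.sqrt (1 - Complex.normSq z) * Real.sqrt (1 - Complex.normSq z)
      = 1 - Complex.normSq z := Real.mul_self_sqrt hu.le
  have ht : Real.sqrt (1 - Complex.normSq z) ≠ 0 := by positivity
  simp only [sPt, Complex.normSq_mul, Complex.normSq_ofReal]
  field_simp
  rw [Real.sq_sqrt hu.le]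

lemma hasFDerivAt_sPt (z : ℂ) (hz : Complex.normSq z < 1) :
    ∃ D : ℂ →L[ℝ] ℂ × ℂ, HasFDerivAt sPt D z ∧
      D 1 = ((((1 / Real.sqrt (1 - Complex.normSq z)) ^ 3 * z.re : ℝ) : ℂ),
        (((1 / Real.sqrt (1 - Complex.normSq z)) ^ 3 * z.re : ℝ) : ℂ) * z +
          ((1 / Real.sqrt (1 - Complex.normSq z) : ℝ) : ℂ)) ∧
      D Complex.I = ((((1 / Real.sqrt (1 - Complex.normSq z)) ^ 3 * z.im : ℝ) : ℂ),
        (((1 / Real.sqrt (1 - Complex.normSq z)) ^ 3 * z.im : ℝ) : ℂ) * z +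
          ((1 / Real.sqrt (1 - Complex.normSq z) : ℝ) : ℂ) * Complex.I) := by
  have hu : (0:ℝ) < 1 - Complex.normSq z := by linarith
  have ht : (0:ℝ) < Real.sqrt (1 - Complex.normSq z) := Real.sqrt_pos.2 hu
  have hre := Complex.reCLM.hasFDerivAt (x := z)
  have him := Complex.imCLM.hasFDerivAt (x := z)
  have hnsq : HasFDerivAt (fun w : ℂ => Complex.normSq w)
      (z.re • Complex.reCLM + z.re • Complex.reCLM +
        (z.im • Complex.imCLM + z.im • Complex.imCLM)) z := by
    have h := (hre.mul hre).add (him.mul him)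
    simp only [Complex.reCLM_apply, Complex.imCLM_apply] at h
    have hfun : (fun y : ℂ => y.re * y.re + y.im * y.im) = fun w : ℂ => Complex.normSq w := by
      funext w; simp [Complex.normSq_apply]
    rw [show (fun w : ℂ => Complex.normSq w) = ⇑Complex.reCLM * ⇑Complex.reCLM + ⇑Complex.imCLM * ⇑Complex.imCLM from by funext w; simp [Complex.normSq_apply]]; exact h
  have h1 : HasFDerivAt (fun w : ℂ => 1 - Complex.normSq w)
      ((0 : ℂ →L[ℝ] ℝ) - (z.re • Complex.reCLM + z.re • Complex.reCLM +
        (z.im • Complex.imCLM + z.im • Complex.imCLM))) z :=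
    (hasFDerivAt_const (1:ℝ) z).sub hnsq
  have h2 := h1.sqrt (ne_of_gt hu)
  have h3 := (hasDerivAt_inv (ne_of_gt ht)).comp_hasFDerivAt z h2
  have h4 := Complex.ofRealCLM.hasFDerivAt.comp z h3
  have h5 := h4.mul (hasFDerivAt_id z)
  have h6 := HasFDerivAt.prodMk h4 h5
  refine ⟨(Complex.ofRealCLM.comp
      (-(Real.sqrt (1 - Complex.normSq z) ^ 2)⁻¹ •
        (1 / (2 * Real.sqrt (1 - Complex.normSq z))) •
          ((0 : ℂ →L[ℝ] ℝ) - (z.re • Complex.reCLM + z.re • Complex.reCLM +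
            (z.im • Complex.imCLM + z.im • Complex.imCLM))))).prod
      ((((Real.sqrt (1 - Complex.normSq z))⁻¹ : ℝ) : ℂ) • ContinuousLinearMap.id ℝ ℂ +
        z • Complex.ofRealCLM.comp
          (-(Real.sqrt (1 - Complex.normSq z) ^ 2)⁻¹ •
            (1 / (2 * Real.sqrt (1 - Complex.normSq z))) •
              ((0 : ℂ →L[ℝ] ℝ) - (z.re • Complex.reCLM + z.re • Complex.reCLM +
                (z.im • Complex.imCLM + z.im • Complex.imCLM))))), ?_, ?_, ?_⟩
  · have hfun : (fun x : ℂ =>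
        ((⇑Complex.ofRealCLM ∘ (fun y => y⁻¹) ∘ fun y => Real.sqrt (1 - Complex.normSq y)) x,
          (⇑Complex.ofRealCLM ∘ (fun y => y⁻¹) ∘ fun y => Real.sqrt (1 - Complex.normSq y)) x *
            id x)) = sPt := by
      funext w; simp [sPt, Function.comp, one_div]
    rw [← hfun]; exact h6
  all_goals refine Prod.ext ?_ ?_
  all_goals
    have htne : Real.sqrt (1 - Complex.normSq z) ≠ 0 := ne_of_gt ht
    have htnec : ((Real.sqrt (1 - Complex.normSq z) : ℝ) : ℂ) ≠ 0 := by exact_mod_cast htne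
    simp only [ContinuousLinearMap.prod_apply, ContinuousLinearMap.comp_apply,
      ContinuousLinearMap.smul_apply, ContinuousLinearMap.add_apply,
      ContinuousLinearMap.sub_apply, ContinuousLinearMap.zero_apply,
      ContinuousLinearMap.coe_id', id_eq, Complex.ofRealCLM_apply,
      Complex.reCLM_apply, Complex.imCLM_apply, Complex.one_re, Complex.one_im,
      Complex.I_re, Complex.I_im, smul_eq_mul]
    push_cast
    field_simp
    ring

lemma core (x y aR : ℝ) (Z Gv Nc : ℂ) (L : ℂ × ℂ →L[ℝ] ℂ)
    (hZ : (x : ℂ) + (y : ℂ) * Complex.I = Z)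
    (hc : (aR : ℂ) ^ 2 * (1 - ((x : ℂ) ^ 2 + (y : ℂ) ^ 2)) = 1)
    (hE : (aR : ℂ) * Z * ((L (0, 1) - Complex.I * L (0, Complex.I)) / 2) +
        (aR : ℂ) * ((L (1, 0) - Complex.I * L (Complex.I, 0)) / 2) -
        (aR : ℂ) * ((starRingEnd ℂ) Z) * ((L (0, 1) + Complex.I * L (0, Complex.I)) / 2) -
        (aR : ℂ) * ((L (1, 0) + Complex.I * L (Complex.I, 0)) / 2) = Nc * Gv) :
    Complex.I * ((1 - ((x : ℂ) ^ 2 + (y : ℂ) ^ 2)) *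
        ((L (((aR ^ 3 * x : ℝ) : ℂ), ((aR ^ 3 * x : ℝ) : ℂ) * Z + ((aR : ℝ) : ℂ)) +
          Complex.I * L (((aR ^ 3 * y : ℝ) : ℂ),
            ((aR ^ 3 * y : ℝ) : ℂ) * Z + ((aR : ℝ) : ℂ) * Complex.I)) / 2) -
        Nc / 2 * Z * Gv) =
      Complex.I * ((aR : ℂ) * ((L (0, 1) + Complex.I * L (0, Complex.I)) / 2) +
        (aR : ℂ) * Z * ((L (1, 0) + Complex.I * L (Complex.I, 0)) / 2)) := by
  subst hZ
  simp only [map_add, map_mul, Complex.conj_ofReal, Complex.conj_I] at hE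
  rw [clm_decomp L (((aR ^ 3 * x : ℝ) : ℂ))
      ((((aR ^ 3 * x : ℝ) : ℂ)) * ((x : ℂ) + (y : ℂ) * Complex.I) + ((aR : ℝ) : ℂ)),
    clm_decomp L (((aR ^ 3 * y : ℝ) : ℂ))
      ((((aR ^ 3 * y : ℝ) : ℂ)) * ((x : ℂ) + (y : ℂ) * Complex.I) + ((aR : ℝ) : ℂ) * Complex.I)]
  simp only [Complex.add_re, Complex.add_im, Complex.mul_re, Complex.mul_im,
    Complex.ofReal_re, Complex.ofReal_im, Complex.I_re, Complex.I_im]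
  push_cast
  linear_combination (Complex.I * ((x : ℂ) + (y : ℂ) * Complex.I) / 2) * hE +
    (Complex.I * (aR : ℂ) * ((x : ℂ) + (y : ℂ) * Complex.I) / 2) *
      (L (1, 0) + (x : ℂ) * L (0, 1) + (y : ℂ) * L (0, Complex.I)) * hc +
    (Complex.I * (aR : ℂ) * ((x : ℂ) * (y : ℂ) * L (0, Complex.I) - (y : ℂ) ^ 2 * L (0, 1)) / 2) *
      Complex.I_sq

/-- If F : SU(1,1) → ℂ satisfies the equivariance condition 2iX₀F = -NF, then
i((1-|z|²)∂̄ - (N/2)z)(s*F) = s*(X₊F); in particular, if moreover X₊F = 0 on SU(1,1)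
and N = 0, then s*F is holomorphic on the unit disk. -/
theorem equivariant_pullback_holomorphicity
    (N : ℤ) (F : ℂ × ℂ → ℂ) (hF : Differentiable ℝ F)
    (heq : ∀ p : ℂ × ℂ, Complex.normSq p.1 - Complex.normSq p.2 = 1 →
      2 * Complex.I * X0op F p = -(N : ℂ) * F p) :
    (∀ z : ℂ, ‖z‖ < 1 →
      Complex.I * (((1 - ‖z‖ ^ 2 : ℝ) : ℂ) * wderivBar (fun w => F (sPt w)) z -
          ((N : ℂ) / 2) * z * F (sPt z)) = Xplusop F (sPt z)) ∧
    (N = 0 → (∀ p : ℂ × ℂ, Complex.normSq p.1 - Complex.normSq p.2 = 1 → Xplusop F p = 0) →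
      DifferentiableOn ℂ (fun w => F (sPt w)) {z : ℂ | ‖z‖ < 1}) := by
  have main1 : ∀ z : ℂ, ‖z‖ < 1 →
      Complex.I * (((1 - ‖z‖ ^ 2 : ℝ) : ℂ) * wderivBar (fun w => F (sPt w)) z -
          ((N : ℂ) / 2) * z * F (sPt z)) = Xplusop F (sPt z) := by
    intro z hz1
    have hzn : Complex.normSq z < 1 := by
      nlinarith [Complex.sq_norm z, norm_nonneg z]
    have hu : (0:ℝ) < 1 - Complex.normSq z := by linarith
    have hp := sPt_mem z hzn
    obtain ⟨D, hD, hD1, hDI⟩ := hasFDerivAt_sPt z hzn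
    have hcomp : HasFDerivAt (fun w => F (sPt w)) ((fderiv ℝ F (sPt z)).comp D) z :=
      (hF (sPt z)).hasFDerivAt.comp z hD
    have hw : wderivBar (fun w => F (sPt w)) z
        = ((fderiv ℝ F (sPt z)) (D 1) + Complex.I * (fderiv ℝ F (sPt z)) (D Complex.I)) / 2 := by
      rw [wderivBar, hcomp.fderiv]; rfl
    have hp1 : (sPt z).1 = ((1 / Real.sqrt (1 - Complex.normSq z) : ℝ) : ℂ) := rfl
    have hp2 : (sPt z).2 = ((1 / Real.sqrt (1 - Complex.normSq z) : ℝ) : ℂ) * z := rfl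
    have hE : ((1 / Real.sqrt (1 - Complex.normSq z) : ℝ) : ℂ) * z *
          ((fderiv ℝ F (sPt z) (0, 1) - Complex.I * fderiv ℝ F (sPt z) (0, Complex.I)) / 2) +
        ((1 / Real.sqrt (1 - Complex.normSq z) : ℝ) : ℂ) *
          ((fderiv ℝ F (sPt z) (1, 0) - Complex.I * fderiv ℝ F (sPt z) (Complex.I, 0)) / 2) -
        ((1 / Real.sqrt (1 - Complex.normSq z) : ℝ) : ℂ) * ((starRingEnd ℂ) z) *
          ((fderiv ℝ F (sPt z) (0, 1) + Complex.I * fderiv ℝ F (sPt z) (0, Complex.I)) / 2) -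
        ((1 / Real.sqrt (1 - Complex.normSq z) : ℝ) : ℂ) *
          ((fderiv ℝ F (sPt z) (1, 0) + Complex.I * fderiv ℝ F (sPt z) (Complex.I, 0)) / 2)
        = (N : ℂ) * F (sPt z) := by
      have h := heq (sPt z) hp
      simp only [X0op, d1, d2, d1bar, d2bar, hp1, hp2, map_mul, Complex.conj_ofReal] at h
      linear_combination -h +
        (((1 / Real.sqrt (1 - Complex.normSq z) : ℝ) : ℂ) * z * fderiv ℝ F (sPt z) (0, 1) / 2 -
          ((1 / Real.sqrt (1 - Complex.normSq z) : ℝ) : ℂ) * z * Complex.I *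
            fderiv ℝ F (sPt z) (0, Complex.I) / 2 -
          ((1 / Real.sqrt (1 - Complex.normSq z) : ℝ) : ℂ) * fderiv ℝ F (sPt z) (0, 1) *
            ((starRingEnd ℂ) z) / 2 -
          ((1 / Real.sqrt (1 - Complex.normSq z) : ℝ) : ℂ) * Complex.I *
            fderiv ℝ F (sPt z) (0, Complex.I) * ((starRingEnd ℂ) z) / 2 -
          ((1 / Real.sqrt (1 - Complex.normSq z) : ℝ) : ℂ) * Complex.I *
            fderiv ℝ F (sPt z) (Complex.I, 0)) * Complex.I_sq
    have hXp : Xplusop F (sPt z) =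
        Complex.I * (((1 / Real.sqrt (1 - Complex.normSq z) : ℝ) : ℂ) *
            ((fderiv ℝ F (sPt z) (0, 1) + Complex.I * fderiv ℝ F (sPt z) (0, Complex.I)) / 2) +
          ((1 / Real.sqrt (1 - Complex.normSq z) : ℝ) : ℂ) * z *
            ((fderiv ℝ F (sPt z) (1, 0) + Complex.I * fderiv ℝ F (sPt z) (Complex.I, 0)) / 2)) := by
      simp only [Xplusop, d1bar, d2bar, hp1, hp2]
    have habs : ((1 - ‖z‖ ^ 2 : ℝ) : ℂ)
        = 1 - (((z.re : ℝ) : ℂ) ^ 2 + ((z.im : ℝ) : ℂ) ^ 2) := by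
      rw [show ‖z‖ ^ 2 = Complex.normSq z from Complex.sq_norm z,
        Complex.normSq_apply]
      push_cast; ring
    have hcC : ((1 / Real.sqrt (1 - Complex.normSq z) : ℝ) : ℂ) ^ 2 *
        (1 - (((z.re : ℝ) : ℂ) ^ 2 + ((z.im : ℝ) : ℂ) ^ 2)) = 1 := by
      have h1 : z.re ^ 2 + z.im ^ 2 = Complex.normSq z := by
        rw [Complex.normSq_apply]; ring
      have hr : (1 / Real.sqrt (1 - Complex.normSq z)) ^ 2 * (1 - (z.re ^ 2 + z.im ^ 2)) = 1 := by
        rw [h1, div_pow, one_pow, Real.sq_sqrt hu.le]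
        field_simp
      exact_mod_cast congrArg (fun r : ℝ => (r : ℂ)) hr
    rw [hw, hD1, hDI, hXp, habs]
    exact core z.re z.im (1 / Real.sqrt (1 - Complex.normSq z)) z (F (sPt z)) (N : ℂ)
      (fderiv ℝ F (sPt z)) (Complex.re_add_im z) hcC hE
  refine ⟨main1, ?_⟩
  intro hN hXp0 z hzmem
  simp only [Set.mem_setOf_eq] at hzmem
  subst hN
  have hzn : Complex.normSq z < 1 := by
    nlinarith [Complex.sq_norm z, norm_nonneg z]
  have hu : (0:ℝ) < 1 - Complex.normSq z := by linarith
  have hp := sPt_mem z hzn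
  obtain ⟨D, hD, -, -⟩ := hasFDerivAt_sPt z hzn
  have hcomp : HasFDerivAt (fun w => F (sPt w)) ((fderiv ℝ F (sPt z)).comp D) z :=
    (hF (sPt z)).hasFDerivAt.comp z hD
  have h1 := main1 z hzmem
  rw [hXp0 (sPt z) hp] at h1
  simp only [Int.cast_zero, zero_div, zero_mul, sub_zero] at h1
  have hcne : ((1 - ‖z‖ ^ 2 : ℝ) : ℂ) ≠ 0 := by
    have hlt : (0:ℝ) < 1 - ‖z‖ ^ 2 := by nlinarith [norm_nonneg z]
    exact_mod_cast ne_of_gt hlt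
  have hW : wderivBar (fun w => F (sPt w)) z = 0 := by
    rcases mul_eq_zero.1 h1 with h | h
    · exact absurd h Complex.I_ne_zero
    · rcases mul_eq_zero.1 h with h' | h'
      · exact absurd h' hcne
      · exact h'
  have hW2 : (((fderiv ℝ F (sPt z)).comp D) 1 +
      Complex.I * ((fderiv ℝ F (sPt z)).comp D) Complex.I) / 2 = 0 := by
    rw [← hW, wderivBar, hcomp.fderiv]
  have hLI : ((fderiv ℝ F (sPt z)).comp D) Complex.I =
      Complex.I * ((fderiv ℝ F (sPt z)).comp D) 1 := by
    linear_combination (-2 * Complex.I) * hW2 +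
      (((fderiv ℝ F (sPt z)).comp D) Complex.I) * Complex.I_sq
  have hres : ((1 : ℂ →L[ℂ] ℂ).smulRight (((fderiv ℝ F (sPt z)).comp D) 1)).restrictScalars ℝ
      = (fderiv ℝ F (sPt z)).comp D := by
    apply ContinuousLinearMap.ext; intro w
    simp only [ContinuousLinearMap.coe_restrictScalars', ContinuousLinearMap.smulRight_apply,
      ContinuousLinearMap.one_apply, smul_eq_mul]
    rw [clm_decomp1 ((fderiv ℝ F (sPt z)).comp D) w, hLI]
    linear_combination (-(((fderiv ℝ F (sPt z)).comp D) 1)) * Complex.re_add_im w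
  have hdC : HasFDerivAt (fun w => F (sPt w))
      ((1 : ℂ →L[ℂ] ℂ).smulRight (((fderiv ℝ F (sPt z)).comp D) 1)) z :=
    hasFDerivAt_of_restrictScalars ℝ hcomp hres
  exact hdC.differentiableAt.differentiableWithinAt
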